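/- arXiv:1411.6248 — 8 statements merged into one kernel-verified Lean document; each statement's English description precedes it below -/
import Mathlib

section
/- For the polynomial R(r) = -(1/4)r^4 - (2p^2 - h)r^2 + 2λp^2 r + 1 - (p^2-h)^2 - p^2λ^2 (with real parameters h, p, λ), if R has a multiple root r₀ then R cannot be written as -(1/4)(r-r₁)^2(r-r₂)^2 with r₁ ≠ r₂; i.e., R has at most one multiple root. -/
/-- For `λ ≠ 0`, the quartic
`R(r) = -(1/4)r⁴ - (2p²-h)r² + 2λp²r + 1 - (p²-h)² - p²λ²`
cannot be written as `-(1/4)(r-r₁)²(r-r₂)²` with `r₁ ≠ r₂`;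
i.e. `R` has at most one multiple root. -/
theorem stmt_5 (h p l : ℝ) (hl : l ≠ 0) :
    ¬ ∃ r₁ r₂ : ℝ, r₁ ≠ r₂ ∧ ∀ r : ℝ,
      -(1/4)*r^4 - (2*p^2 - h)*r^2 + 2*l*p^2*r + 1 - (p^2 - h)^2 - p^2*l^2
        = -(1/4)*(r - r₁)^2*(r - r₂)^2 := by
  rintro ⟨r₁, r₂, hne, heq⟩
  have h1 := heq 1
  have h2 := heq (-1)
  have h3 := heq 2
  have h4 := heq (-2)
  have h0 := heq 0
  -- r³ coefficient: r₁ + r₂ = 0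
  have hs : r₁ + r₂ = 0 := by
    linear_combination (-1/6) * h3 + (1/6) * h4 + (1/3) * h1 - (1/3) * h2
  -- r coefficient: 2 l p² = 0
  have hC : 2 * l * p ^ 2 = 0 := by
    linear_combination (2/3) * h1 - (2/3) * h2 - (1/12) * h3 + (1/12) * h4
      + (r₁ * r₂ / 2) * hs
  have hp : p ^ 2 = 0 := by
    rcases mul_eq_zero.mp hC with h' | h'
    · rcases mul_eq_zero.mp h' with h'' | h''
      · norm_num at h''
      · exact absurd h'' hl
    · exact h'
  -- r² coefficient: h + r₁ r₂ / 2 = 0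
  have hB : h + r₁ * r₂ / 2 = 0 := by
    linear_combination (1/2) * h1 + (1/2) * h2 - h0 + 2 * hp
      - ((r₁ + r₂) / 4) * hs
  -- constant term gives 1 = 0
  have : (1 : ℝ) = 0 := by
    linear_combination h0 + hp * (p ^ 2 + l ^ 2 - 2 * h)
      - (r₁ * r₂ / 2 - h) * hB
  norm_num at this
end

section
/- Fix λ ≠ 0 and h. If p₁ ≠ p₂ are real numbers with p₁ + p₂ ≠ 0 such that the pairs (ℓ,k) given by ℓ = -(1/2)p(2h-λ²) + p³ and k = 1 - p²(2h-λ²) + 3p⁴ coincide for p = p₁ and p = p₂, then p₁²+p₁p₂+p₂² = h - λ²/2 and p₁²+p₂² = (1/6)(h - λ²/2), which is impossible; hence either p₁ = p₂ or p₁ = -p₂ with h - λ²/2 = p₁². -/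
/-- Fix `λ ≠ 0` and `h`. If `p₁ ≠ p₂` with `p₁ + p₂ ≠ 0` are such that the pairs `(ℓ,k)`
given by `ℓ = -(1/2)p(2h-λ²) + p³` and `k = 1 - p²(2h-λ²) + 3p⁴` coincide for `p = p₁` and
`p = p₂`, a contradiction follows (so either `p₁ = p₂` or `p₁ = -p₂`). -/
theorem stmt_6 (l h p₁ p₂ : ℝ) (hl : l ≠ 0) (hne : p₁ ≠ p₂) (hsum : p₁ + p₂ ≠ 0)
    (hℓ : -(1/2)*p₁*(2*h - l^2) + p₁^3 = -(1/2)*p₂*(2*h - l^2) + p₂^3)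
    (hk : 1 - p₁^2*(2*h - l^2) + 3*p₁^4 = 1 - p₂^2*(2*h - l^2) + 3*p₂^4) :
    False := by
  have hd : p₁ - p₂ ≠ 0 := sub_ne_zero.mpr hne
  have h1 : (p₁ - p₂) * (p₁^2 + p₁*p₂ + p₂^2 - (h - l^2/2)) = 0 := by
    linear_combination hℓ
  have h2 : (p₁ - p₂) * ((p₁ + p₂) * (3*(p₁^2 + p₂^2) - (2*h - l^2))) = 0 := by
    linear_combination hk
  have e1 : p₁^2 + p₁*p₂ + p₂^2 - (h - l^2/2) = 0 :=
    (mul_eq_zero.mp h1).resolve_left hd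
  have e2 : (p₁ + p₂) * (3*(p₁^2 + p₂^2) - (2*h - l^2)) = 0 :=
    (mul_eq_zero.mp h2).resolve_left hd
  have e3 : 3*(p₁^2 + p₂^2) - (2*h - l^2) = 0 :=
    (mul_eq_zero.mp e2).resolve_left hsum
  have : (p₁ - p₂)^2 = 0 := by linear_combination (-2 : ℝ) * e1 + e3
  exact hd (pow_eq_zero_iff (by norm_num)|>.mp this)
end

section
/- Let X = (λ^{2/3} + √(4+λ^{4/3}))², λ ≥ 0. Then X ≥ 8 if and only if λ ≥ 2^{-3/4}, and the inequality (X-8)³(X³ - 12X² - 32) ≤ 0 holds exactly for X ∈ [8, 2(2 + 2^{2/3} + 2^{4/3})]. -/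
/-!
With `t = λ^{2/3}` and `s = √(4 + t²)` we have `X = 4 + 2t² + 2ts`, so `X ≥ 8` means
`ts ≥ 2 - t²`; since `(ts)² - (2 - t²)² = 4(2t² - 1)`, this is `t² ≥ 1/2`, i.e. `λ ≥ 2^{-3/4}`.

The cubic `Y³ - 12Y² - 32` has the single real root `r = 2(2 + 2^{2/3} + 2^{4/3})` (Cardano),
and its quadratic cofactor is positive, so `(X - 8)³ (X³ - 12X² - 32)` has the sign of
`(X - 8)(X - r)`.
-/

open Real

lemma eight_le_sq_add_sqrt_iff {t : ℝ} (ht : 0 ≤ t) :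
    8 ≤ (t + √(4 + t ^ 2)) ^ 2 ↔ 1 / 2 ≤ t ^ 2 := by
  set s := √(4 + t ^ 2)
  have hs : 0 ≤ s := sqrt_nonneg _
  have hs2 : s ^ 2 = 4 + t ^ 2 := sq_sqrt (by positivity)
  have key : (t * s) ^ 2 - (2 - t ^ 2) ^ 2 = 4 * (2 * t ^ 2 - 1) := by
    linear_combination t ^ 2 * hs2
  constructor
  · intro h
    nlinarith [mul_nonneg ht hs]
  · intro h
    nlinarith [mul_nonneg ht hs, sq_nonneg (t * s - (2 - t ^ 2)), sq_nonneg (t * s + (2 - t ^ 2))]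

lemma pow_three_mul_nonpos_iff {R : Type*} [Ring R] [LinearOrder R] [IsStrictOrderedRing R]
    {a b : R} : a ^ 3 * b ≤ 0 ↔ a * b ≤ 0 := by
  rcases eq_or_ne a 0 with rfl | ha
  · simp
  have h := mul_le_mul_iff_of_pos_left (b := a * b) (c := 0) (sq_pos_of_ne_zero ha)
  rwa [mul_zero, ← mul_assoc, ← pow_succ] at h

lemma cubic_eq_mul_of_root {r : ℝ} (hr : r ^ 3 - 12 * r ^ 2 - 32 = 0) (Y : ℝ) :
    Y ^ 3 - 12 * Y ^ 2 - 32 = (Y - r) * (Y ^ 2 + (r - 12) * Y + (r ^ 2 - 12 * r)) := by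
  linear_combination hr

lemma twelve_lt_of_root {r : ℝ} (hr : r ^ 3 - 12 * r ^ 2 - 32 = 0) : 12 < r := by
  nlinarith [sq_nonneg r]

lemma quadratic_cofactor_pos {r : ℝ} (hr : 12 < r) (Y : ℝ) :
    0 < Y ^ 2 + (r - 12) * Y + (r ^ 2 - 12 * r) := by
  nlinarith [sq_nonneg (2 * Y + r - 12), mul_pos (sub_pos.2 hr) (by linarith : (0:ℝ) < r + 4)]

lemma sub_eight_pow_three_mul_cubic_nonpos_iff {r : ℝ} (hr : r ^ 3 - 12 * r ^ 2 - 32 = 0)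
    (X : ℝ) : (X - 8) ^ 3 * (X ^ 3 - 12 * X ^ 2 - 32) ≤ 0 ↔ 8 ≤ X ∧ X ≤ r := by
  have h12 := twelve_lt_of_root hr
  rw [cubic_eq_mul_of_root hr, ← mul_assoc, ← zero_mul (_ + _),
    mul_le_mul_iff_of_pos_right (quadratic_cofactor_pos h12 X), pow_three_mul_nonpos_iff,
    sub_mul_sub_nonpos_iff X (by linarith)]

-- Cardano's formula: `Y = Z + 4` gives `Z³ - 48Z - 160`, with root `∛128 + ∛32`.
lemma cubic_eq_zero_at_cardano_root {c : ℝ} (hc : c ^ 3 = 2) :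
    (2 * (2 + c ^ 2 + c ^ 4)) ^ 3 - 12 * (2 * (2 + c ^ 2 + c ^ 4)) ^ 2 - 32 = 0 := by
  have hc4 : c ^ 4 = 2 * c := by linear_combination c * hc
  rw [hc4]
  linear_combination (8 * c ^ 3 + 48 * c ^ 2 + 96 * c + 80) * hc

/-- Let `X = (λ^{2/3} + √(4+λ^{4/3}))²`, `λ ≥ 0`. Then `X ≥ 8` iff `λ ≥ 2^{-3/4}`, and
`(X-8)³(X³ - 12X² - 32) ≤ 0` holds exactly for `X ∈ [8, 2(2 + 2^{2/3} + 2^{4/3})]`. -/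
theorem stmt_11 (l X : ℝ) (hl : 0 ≤ l)
    (hX : X = (l ^ ((2:ℝ)/3) + Real.sqrt (4 + l ^ ((4:ℝ)/3)))^2) :
    (8 ≤ X ↔ (2:ℝ) ^ (-(3:ℝ)/4) ≤ l) ∧
    ((X - 8)^3 * (X^3 - 12*X^2 - 32) ≤ 0 ↔
      (8 ≤ X ∧ X ≤ 2*(2 + (2:ℝ) ^ ((2:ℝ)/3) + (2:ℝ) ^ ((4:ℝ)/3)))) := by
  have ht2 : (l ^ ((2:ℝ)/3)) ^ 2 = l ^ ((4:ℝ)/3) := by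
    rw [← rpow_mul_natCast hl]; norm_num
  have half : (1:ℝ) / 2 = ((2:ℝ) ^ (-(3:ℝ)/4)) ^ ((4:ℝ)/3) := by
    rw [← rpow_mul zero_le_two]; norm_num
  have h23 : (2:ℝ) ^ ((2:ℝ)/3) = ((2:ℝ) ^ ((1:ℝ)/3)) ^ 2 := by
    rw [← rpow_mul_natCast zero_le_two]; norm_num
  have h43 : (2:ℝ) ^ ((4:ℝ)/3) = ((2:ℝ) ^ ((1:ℝ)/3)) ^ 4 := by
    rw [← rpow_mul_natCast zero_le_two]; norm_num
  have hc : ((2:ℝ) ^ ((1:ℝ)/3)) ^ 3 = 2 := by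
    rw [← rpow_mul_natCast zero_le_two]; norm_num
  constructor
  · rw [hX, ← ht2, eight_le_sq_add_sqrt_iff (rpow_nonneg hl _), ht2, half,
      rpow_le_rpow_iff (by positivity) hl (by norm_num)]
  · rw [h23, h43]
    exact sub_eight_pow_three_mul_cubic_nonpos_iff (cubic_eq_zero_at_cardano_root hc) X
end

section
/- The polynomial Q1(X) = 3X⁴ + 32X³ - 180X² + 96X - 64 has exactly one root in the interval (4/3, 4]. -/
private lemma q1_exists : ∃ x : ℝ, x ∈ Set.Icc (3.6:ℝ) 3.7 ∧
    3*x^4 + 32*x^3 - 180*x^2 + 96*x - 64 = 0 := by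
  have hc : ContinuousOn (fun x : ℝ => 3*x^4 + 32*x^3 - 180*x^2 + 96*x - 64)
      (Set.Icc (3.6:ℝ) 3.7) := by fun_prop
  have h := intermediate_value_Icc (by norm_num : (3.6:ℝ) ≤ 3.7) hc
  have h0 : (0:ℝ) ∈ Set.Icc (3*(3.6:ℝ)^4 + 32*3.6^3 - 180*3.6^2 + 96*3.6 - 64)
      (3*(3.7:ℝ)^4 + 32*3.7^3 - 180*3.7^2 + 96*3.7 - 64) := by
    constructor <;> norm_num
  obtain ⟨x, hx, hfx⟩ := h h0
  exact ⟨x, hx, hfx⟩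

/-- The polynomial `Q1(X) = 3X⁴ + 32X³ - 180X² + 96X - 64` has exactly one root in
the interval `(4/3, 4]`. -/
theorem stmt_12 :
    ∃! X : ℝ, X ∈ Set.Ioc (4/3 : ℝ) 4 ∧ 3*X^4 + 32*X^3 - 180*X^2 + 96*X - 64 = 0 := by
  obtain ⟨x, ⟨hx1, hx2⟩, hfx⟩ := q1_exists
  have hloc : ∀ y : ℝ, y ∈ Set.Ioc (4/3 : ℝ) 4 →
      3*y^4 + 32*y^3 - 180*y^2 + 96*y - 64 = 0 → (3.6:ℝ) ≤ y ∧ y ≤ 3.7 := by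
    rintro y ⟨hy1, hy2⟩ hfy
    constructor
    · by_contra h
      push_neg at h
      nlinarith [sq_nonneg (y - 4/3), sq_nonneg (y - 3.6), sq_nonneg (y - 2.5),
        mul_pos (sub_pos.mpr hy1) (sub_pos.mpr h), sq_nonneg y]
    · by_contra h
      push_neg at h
      nlinarith [sq_nonneg (y - 4), sq_nonneg (y - 3.7), sq_nonneg (y*y - 14),
        mul_pos (sub_pos.mpr h) (show (0:ℝ) < y - 3 by linarith)]
  refine ⟨x, ⟨⟨by linarith, by linarith⟩, hfx⟩, ?_⟩
  rintro y ⟨hy, hfy⟩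
  obtain ⟨hy1, hy2⟩ := hloc y hy hfy
  by_contra hne
  rcases lt_or_gt_of_ne hne with hlt | hlt
  · nlinarith [mul_pos (sub_pos.mpr hlt)
      (show (0:ℝ) < 3*(x^3+x^2*y+x*y^2+y^3) + 32*(x^2+x*y+y^2) - 180*(x+y) + 96 by nlinarith)]
  · nlinarith [mul_pos (sub_pos.mpr hlt)
      (show (0:ℝ) < 3*(x^3+x^2*y+x*y^2+y^3) + 32*(x^2+x*y+y^2) - 180*(x+y) + 96 by nlinarith)]
end

section
/- The polynomial 64λ¹⁶ + 2784λ¹² - 274803λ⁸ + 15476896λ⁴ - 45349632 has exactly one real positive root λ₂, and λ₂ ∈ (1.32, 1.33). -/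
/-!
In the variable `t = λ⁴` the polynomial becomes the quartic
`q t = 64t⁴ + 2784t³ - 274803t² + 15476896t - 45349632`, whose derivative is positive on `t ≥ 0`.
Hence `λ ↦ q (λ⁴)` is strictly increasing on `λ ≥ 0`; it is negative at `1.32` and positive at
`1.33`, so by the intermediate value theorem it has exactly one positive zero, lying in between.
-/

open Set

theorem StrictMonoOn.existsUnique_pos_zero_and_mem_Ioo {f : ℝ → ℝ} {a b : ℝ}
    (hmono : StrictMonoOn f (Ioi 0)) (hcont : ContinuousOn f (Icc a b)) (ha : 0 < a)
    (hab : a ≤ b) (hfa : f a < 0) (hfb : 0 < f b) :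
    (∃! x, 0 < x ∧ f x = 0) ∧ ∀ x, 0 < x → f x = 0 → a < x ∧ x < b := by
  have hb : 0 < b := ha.trans_le hab
  have mem_Ioo : ∀ x, 0 < x → f x = 0 → a < x ∧ x < b := fun x hx hfx =>
    ⟨(hmono.lt_iff_lt ha hx).mp (hfa.trans_eq hfx.symm),
      (hmono.lt_iff_lt hx hb).mp (hfx.trans_lt hfb)⟩
  obtain ⟨r, hr, hfr⟩ := intermediate_value_Ioo hab hcont ⟨hfa, hfb⟩
  have hr_pos : 0 < r := ha.trans hr.1
  refine ⟨⟨r, ⟨hr_pos, hfr⟩, fun y ⟨hy, hfy⟩ => hmono.injOn hy hr_pos (hfy.trans hfr.symm)⟩,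
    mem_Ioo⟩

noncomputable def quartic (t : ℝ) : ℝ :=
  64 * t ^ 4 + 2784 * t ^ 3 - 274803 * t ^ 2 + 15476896 * t - 45349632

theorem hasDerivAt_quartic (t : ℝ) :
    HasDerivAt quartic (256 * t ^ 3 + 8352 * t ^ 2 - 549606 * t + 15476896) t := by
  have h := (((((hasDerivAt_pow 4 t).const_mul (64 : ℝ)).add
      ((hasDerivAt_pow 3 t).const_mul (2784 : ℝ))).sub
      ((hasDerivAt_pow 2 t).const_mul (274803 : ℝ))).add
      ((hasDerivAt_id t).const_mul (15476896 : ℝ))).sub_const (45349632 : ℝ)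
  refine h.congr_deriv ?_
  push_cast
  ring

theorem quartic_deriv_pos {t : ℝ} (ht : 0 ≤ t) :
    0 < 256 * t ^ 3 + 8352 * t ^ 2 - 549606 * t + 15476896 := by
  -- `256 t (t - 27)² ≥ 0`, and the remaining quadratic `22176 t² - 736230 t + 15476896`
  -- has negative discriminant.
  nlinarith [mul_nonneg ht (sq_nonneg (t - 27)), sq_nonneg (t - 17)]

theorem strictMonoOn_quartic : StrictMonoOn quartic (Ici 0) := by
  refine strictMonoOn_of_deriv_pos (convex_Ici 0)
    (fun t _ => (hasDerivAt_quartic t).continuousAt.continuousWithinAt) fun t ht => ?_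
  rw [interior_Ici] at ht
  rw [(hasDerivAt_quartic t).deriv]
  exact quartic_deriv_pos (le_of_lt ht)

theorem strictMonoOn_quartic_pow_four : StrictMonoOn (fun x => quartic (x ^ 4)) (Ioi 0) :=
  strictMonoOn_quartic.comp ((pow_left_strictMonoOn₀ (by norm_num)).mono Ioi_subset_Ici_self)
    fun _ hx => mem_Ici.mpr (pow_nonneg (le_of_lt hx) 4)

theorem quartic_pow_four (x : ℝ) :
    quartic (x ^ 4) = 64*x^16 + 2784*x^12 - 274803*x^8 + 15476896*x^4 - 45349632 := by
  unfold quartic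
  ring

/-- The polynomial `64λ¹⁶ + 2784λ¹² - 274803λ⁸ + 15476896λ⁴ - 45349632` has exactly one
positive real root `λ₂`, and `λ₂ ∈ (1.32, 1.33)`. -/
theorem stmt_13 :
    (∃! x : ℝ, 0 < x ∧
      64*x^16 + 2784*x^12 - 274803*x^8 + 15476896*x^4 - 45349632 = 0) ∧
    (∀ x : ℝ, 0 < x →
      64*x^16 + 2784*x^12 - 274803*x^8 + 15476896*x^4 - 45349632 = 0 →
      (1.32 : ℝ) < x ∧ x < (1.33 : ℝ)) := by
  have hcont : ContinuousOn (fun x => quartic (x ^ 4)) (Icc 1.32 1.33) := by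
    unfold quartic
    fun_prop
  have key := strictMonoOn_quartic_pow_four.existsUnique_pos_zero_and_mem_Ioo hcont
    (by norm_num) (by norm_num) (by norm_num [quartic]) (by norm_num [quartic])
  simpa only [quartic_pow_four] using key
end

section
/- For λ ≥ 0, the function r ↦ (r-λ)³(r+λ) - 4, restricted to r ≤ 0, has a root if and only if λ ≥ 2√2/3^{3/4}; moreover, as a function of the parametrization r = -x/2 + 2/x³, λ = x/2 + 2/x³ (x ≥ √2), the minimum of λ over x > 0 of x/2 + 2/x³ equals 2√2/3^{3/4} and is attained at x = √(2√3). -/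
/-!
Put `u = λ - r`. The equation `(r - λ)³(r + λ) = -4` becomes `λ = u/2 + 2/u³`, and the side
condition `r ≤ 0 ≤ λ` forces `u > 0`, while `r ≤ 0` means `u⁴ ≥ 4`. The function
`u ↦ u/2 + 2/u³` on `u > 0` attains its minimum `2x₀/3 = 2√2/3^{3/4}` at `x₀ = 12^{1/4} = √(2√3)`,
which satisfies `x₀⁴ ≥ 4`, and it tends to infinity, so by the intermediate value theorem every
`λ ≥ 2x₀/3` is attained by some `u ≥ x₀`.
-/

open Real

lemma sqrt_two_mul_sqrt_three_pow_four : √(2 * √3) ^ 4 = 12 := by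
  have h3 : √3 ^ 2 = 3 := sq_sqrt (by norm_num)
  have h : √(2 * √3) ^ 2 = 2 * √3 := sq_sqrt (by positivity)
  rw [show (4 : ℕ) = 2 * 2 from rfl, pow_mul, h]
  nlinarith [h3]

lemma rpow_three_quarters_sq : ((3 : ℝ) ^ ((3 : ℝ) / 4)) ^ 2 = 3 * √3 := by
  rw [← rpow_natCast, ← rpow_mul (by norm_num), show (3 : ℝ) / 4 * (2 : ℕ) = 1 + 1 / 2 by norm_num,
    rpow_add (by norm_num), rpow_one, sqrt_eq_rpow]

lemma two_sqrt_two_div_rpow_eq : 2 * √2 / (3 : ℝ) ^ ((3 : ℝ) / 4) = 2 * √(2 * √3) / 3 := by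
  have ht : 0 < (3 : ℝ) ^ ((3 : ℝ) / 4) := by positivity
  have hx : 0 < √(2 * √3) := by positivity
  have h2 : √2 ^ 2 = 2 := sq_sqrt (by norm_num)
  have h3 : √3 ^ 2 = 3 := sq_sqrt (by norm_num)
  have hx2 : √(2 * √3) ^ 2 = 2 * √3 := sq_sqrt (by positivity)
  have key : 3 * √2 = √(2 * √3) * (3 : ℝ) ^ ((3 : ℝ) / 4) := by
    refine (pow_left_inj₀ (by positivity) (by positivity) two_ne_zero).mp ?_
    rw [mul_pow, mul_pow, hx2, rpow_three_quarters_sq, h2]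
    nlinarith [h3]
  rw [div_eq_div_iff ht.ne' (by norm_num)]
  linarith

section Minimum

variable {x₀ : ℝ} (h₀ : x₀ ^ 4 = 12)
include h₀

lemma half_add_two_div_pow_three_eq_two_mul_div_three : x₀ / 2 + 2 / x₀ ^ 3 = 2 * x₀ / 3 := by
  have hx₀ : x₀ ≠ 0 := by rintro rfl; norm_num at h₀
  field_simp
  linear_combination (-1 : ℝ) * h₀

lemma two_mul_div_three_le_half_add_two_div_pow_three {x : ℝ} (hx : 0 < x) :
    2 * x₀ / 3 ≤ x / 2 + 2 / x ^ 3 := by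
  -- The numerator `x⁴ - (4/3)x₀x³ + 4` has a double root at `x₀`.
  have hfactor : x ^ 4 - 4 / 3 * x₀ * x ^ 3 + 4
      = (x - x₀) ^ 2 * ((x + x₀ / 3) ^ 2 + 2 * x₀ ^ 2 / 9) := by
    linear_combination (-1 / 3 : ℝ) * h₀
  have hdiff : x / 2 + 2 / x ^ 3 - 2 * x₀ / 3 = (x ^ 4 - 4 / 3 * x₀ * x ^ 3 + 4) / (2 * x ^ 3) := by
    field_simp
    ring
  have : 0 ≤ x / 2 + 2 / x ^ 3 - 2 * x₀ / 3 := by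
    rw [hdiff, hfactor]
    positivity
  linarith

end Minimum

lemma half_add_two_div_pow_three_le_self {x : ℝ} (hx : 0 < x) (hx4 : 4 ≤ x ^ 4) :
    x / 2 + 2 / x ^ 3 ≤ x := by
  have : 2 / x ^ 3 ≤ x / 2 := by
    rw [div_le_div_iff₀ (by positivity) two_pos]
    nlinarith
  linarith

lemma exists_ge_half_add_two_div_pow_three_eq {a l : ℝ} (ha : 0 < a)
    (hl : a / 2 + 2 / a ^ 3 ≤ l) : ∃ x, a ≤ x ∧ x / 2 + 2 / x ^ 3 = l := by
  set b := max a (2 * l)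
  have hab : a ≤ b := le_max_left _ _
  have hcont : ContinuousOn (fun x : ℝ => x / 2 + 2 / x ^ 3) (Set.Icc a b) := by
    refine ContinuousOn.add (by fun_prop) (continuousOn_const.div (by fun_prop) ?_)
    intro y hy
    exact pow_ne_zero _ (ha.trans_le hy.1).ne'
  have hlb : l ≤ b / 2 + 2 / b ^ 3 := by
    have : 0 < 2 / b ^ 3 := by have := ha.trans_le hab; positivity
    linarith [le_max_right a (2 * l)]
  obtain ⟨x, hx, hxl⟩ := intermediate_value_Icc hab hcont ⟨hl, hlb⟩
  exact ⟨x, hx.1, hxl⟩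

lemma sub_pow_three_mul_add_add_four_eq_zero_iff (r l : ℝ) :
    (r - l) ^ 3 * (r + l) + 4 = 0 ↔ l - r ≠ 0 ∧ l = (l - r) / 2 + 2 / (l - r) ^ 3 := by
  constructor
  · intro h
    have hu : l - r ≠ 0 := by
      intro hu
      rw [show r - l = -(l - r) by ring, hu] at h
      norm_num at h
    refine ⟨hu, ?_⟩
    field_simp
    linear_combination -h
  · rintro ⟨hu, h⟩
    have hr : r = l - (l - r) := by ring
    generalize l - r = u at hu h hr
    subst hr h
    field_simp
    ring

/-- For `λ ≥ 0`, the equation `(r-λ)³(r+λ) + 4 = 0` (the curve ℓ₀) has a root with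
`r ≤ 0` iff `λ ≥ 2√2/3^{3/4}`; moreover, in the parametrization
`r = -x/2 + 2/x³`, `λ = x/2 + 2/x³`, the minimum over `x > 0` of `x/2 + 2/x³` equals
`2√2/3^{3/4}` and is attained at `x = √(2√3)`. -/
theorem stmt_15 (l : ℝ) (hl : 0 ≤ l) :
    ((∃ r : ℝ, r ≤ 0 ∧ (r - l)^3*(r + l) + 4 = 0) ↔
      2*Real.sqrt 2 / (3:ℝ) ^ ((3:ℝ)/4) ≤ l) ∧
    (∀ x : ℝ, 0 < x → 2*Real.sqrt 2 / (3:ℝ) ^ ((3:ℝ)/4) ≤ x/2 + 2/x^3) ∧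
    (Real.sqrt (2*Real.sqrt 3)/2 + 2/(Real.sqrt (2*Real.sqrt 3))^3
      = 2*Real.sqrt 2 / (3:ℝ) ^ ((3:ℝ)/4)) := by
  have h₀ := sqrt_two_mul_sqrt_three_pow_four
  have hx₀ : 0 < √(2 * √3) := by positivity
  rw [two_sqrt_two_div_rpow_eq]
  refine ⟨⟨?_, ?_⟩, fun x hx => two_mul_div_three_le_half_add_two_div_pow_three h₀ hx,
    half_add_two_div_pow_three_eq_two_mul_div_three h₀⟩
  · rintro ⟨r, hr, heq⟩
    obtain ⟨hu, hlu⟩ := (sub_pow_three_mul_add_add_four_eq_zero_iff r l).mp heq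
    rw [hlu]
    exact two_mul_div_three_le_half_add_two_div_pow_three h₀ (lt_of_le_of_ne (by linarith) hu.symm)
  · intro hlow
    rw [← half_add_two_div_pow_three_eq_two_mul_div_three h₀] at hlow
    obtain ⟨x, hx, rfl⟩ := exists_ge_half_add_two_div_pow_three_eq hx₀ hlow
    have hxpos := hx₀.trans_le hx
    have hx4 : 4 ≤ x ^ 4 := by linarith [pow_le_pow_left₀ hx₀.le hx 4]
    refine ⟨x / 2 + 2 / x ^ 3 - x, by linarith [half_add_two_div_pow_three_le_self hxpos hx4], ?_⟩
    rw [sub_pow_three_mul_add_add_four_eq_zero_iff, sub_sub_cancel]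
    exact ⟨hxpos.ne', rfl⟩
end

section
/- For 0 < z < 1, the parametrization λ = (1/z - z)^{3/2}, r = -√(z(1-z²)), h = (z/2)(3+z²), ℓ = ∓(3z²-1)/(2z^{3/2}) satisfies r(λ - r)(λ - 2r) + λ√(4 + r²(r-λ)²) = 0, i.e. it lies on the degeneracy curve π₂₄. -/
/-!
Put `u = 1/z - z > 0` and `s = √u`, so that `λ = u s` and `r = -z s`. Since `z (u + z) = 1`,
`r - λ = -s/z`, hence `r²(r - λ)² = u²` and `D = √(4 + u²) = z + 1/z`. The cubic term is then
`-s³ (u + 2z) = -u s (z + 1/z) = -λ D`.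
-/

lemma Real.rpow_three_halves {x : ℝ} (hx : 0 ≤ x) : x ^ ((3 : ℝ) / 2) = x * √x := by
  rw [show (3 : ℝ) / 2 = 1 + 1 / 2 by norm_num, Real.rpow_add' hx (by norm_num), Real.rpow_one,
    Real.sqrt_eq_rpow]

lemma Real.sqrt_mul_one_sub_sq {z : ℝ} (hz : 0 < z) : √(z * (1 - z ^ 2)) = z * √(1 / z - z) := by
  rw [show z * (1 - z ^ 2) = z ^ 2 * (1 / z - z) by field_simp, Real.sqrt_mul (sq_nonneg z),
    Real.sqrt_sq hz.le]

section Pi24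

variable {z s : ℝ} (hz : z ≠ 0) (hs : z * s ^ 2 = 1 - z ^ 2)
include hz hs

lemma pi24_discriminant_eq :
    4 + (-(z * s)) ^ 2 * (-(z * s) - (1 / z - z) * s) ^ 2 = (z + 1 / z) ^ 2 := by
  field_simp
  linear_combination (z * s ^ 2 + 1 - z ^ 2) * hs

lemma pi24_identity :
    -(z * s) * ((1 / z - z) * s - -(z * s)) * ((1 / z - z) * s - 2 * -(z * s))
      + (1 / z - z) * s * (z + 1 / z) = 0 := by
  field_simp
  linear_combination -(s * (1 + z ^ 2)) * hs

end Pi24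

/-- For `0 < z < 1`, the parametrization `λ = (1/z - z)^{3/2}`, `r = -√(z(1-z²))`
satisfies `r(λ-r)(λ-2r) + λ√(4 + r²(r-λ)²) = 0`, i.e. it lies on the degeneracy
curve π₂₄. -/
theorem stmt_16 (z l r : ℝ) (hz : 0 < z) (hz1 : z < 1)
    (hl : l = (1/z - z) ^ ((3:ℝ)/2))
    (hr : r = -Real.sqrt (z*(1 - z^2))) :
    r*(l - r)*(l - 2*r) + l*Real.sqrt (4 + r^2*(r - l)^2) = 0 := by
  have hu : 0 ≤ 1 / z - z := by
    rw [sub_nonneg, le_div_iff₀ hz]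
    nlinarith
  have hs : z * √(1 / z - z) ^ 2 = 1 - z ^ 2 := by
    rw [Real.sq_sqrt hu]
    field_simp
  rw [hl, hr, Real.rpow_three_halves hu, Real.sqrt_mul_one_sub_sq hz,
    pi24_discriminant_eq hz.ne' hs, Real.sqrt_sq (by positivity)]
  exact pi24_identity hz.ne' hs
end

section
/- Let λ > 0 and let r ∈ ℝ, r ≠ λ, with D = √(4 + r²(r-λ)²) chosen with sign equal to sign(r(r-λ)). Then the quantity p² := (r/2)(-r + D/(r-λ)) is nonnegative on each of the intervals r ∈ (-∞, 0], r ∈ [0, λ), r ∈ (λ, ∞) with the corresponding sign choices (D > 0 for r ≤ 0 and r > λ; D < 0 for 0 ≤ r < λ). -/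
/-- For `λ > 0`, `r ≠ λ`, with `D = ±√(4 + r²(r-λ)²)` chosen with sign equal to
`sign(r(r-λ))`, the quantity `p² = (r/2)(-r + D/(r-λ))` is nonnegative on each of the
intervals `r ≤ 0` (`D > 0`), `0 ≤ r < λ` (`D < 0`), `r > λ` (`D > 0`). -/
theorem stmt_17 (l r : ℝ) (hl : 0 < l) (hne : r ≠ l) :
    (r ≤ 0 → 0 ≤ (r/2)*(-r + Real.sqrt (4 + r^2*(r - l)^2)/(r - l))) ∧
    (0 ≤ r → r < l →
      0 ≤ (r/2)*(-r + (-(Real.sqrt (4 + r^2*(r - l)^2)))/(r - l))) ∧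
    (l < r → 0 ≤ (r/2)*(-r + Real.sqrt (4 + r^2*(r - l)^2)/(r - l))) := by
  set s := Real.sqrt (4 + r^2*(r - l)^2) with hs
  have hs0 : 0 ≤ s := Real.sqrt_nonneg _
  have habs : |r*(r - l)| ≤ s := by
    rw [hs]
    have h1 : |r*(r-l)| = Real.sqrt ((r*(r-l))^2) := (Real.sqrt_sq_eq_abs _).symm
    rw [h1]
    apply Real.sqrt_le_sqrt
    nlinarith
  have hle : r*(r-l) ≤ s := le_trans (le_abs_self _) habs
  have hge : -(r*(r-l)) ≤ s := le_trans (neg_le_abs _) habs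
  have hne2 : r - l ≠ 0 := sub_ne_zero.mpr hne
  have hne3 : l - r ≠ 0 := fun h => hne (by linarith)
  refine ⟨fun hr => ?_, fun hr0 hrl => ?_, fun hr => ?_⟩
  · have hne' : r - l < 0 := by linarith
    have heq : (r/2)*(-r + s/(r - l)) = (r/(2*(r-l)))*(s - r*(r-l)) := by
      field_simp [hne2, hne3]
      ring_nf
      try tauto
    rw [heq]
    apply mul_nonneg
    · exact div_nonneg_iff.mpr (Or.inr ⟨hr, by linarith⟩)
    · linarith
  · have hne' : r - l < 0 := by linarith
    have heq : (r/2)*(-r + (-s)/(r - l)) = (r/(2*(l-r)))*(s + r*(r-l)) := by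
      field_simp [hne2, hne3]
      ring_nf
      try tauto
    rw [heq]
    apply mul_nonneg
    · apply div_nonneg hr0; linarith
    · linarith
  · have hne' : 0 < r - l := by linarith
    have heq : (r/2)*(-r + s/(r - l)) = (r/(2*(r-l)))*(s - r*(r-l)) := by
      field_simp [hne2, hne3]
      ring_nf
      try tauto
    rw [heq]
    apply mul_nonneg
    · apply div_nonneg (by linarith); linarith
    · linarith
end
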